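/- arXiv:1905.13102 — 5 statements merged into one kernel-verified Lean document; each statement's English description precedes it below -/
import Mathlib

section
/- Let a0, a1, a2 : ℝ → ℝ and let x1, x2, x3 : ℝ → ℝ be differentiable functions each satisfying the Riccati equation x'(t) = a0(t) + a1(t)·x(t) + a2(t)·x(t)² for all t ∈ ℝ. Let k ∈ ℝ and assume that (x3(t) − x2(t)) + k·(x3(t) − x1(t)) ≠ 0 for all t ∈ ℝ. Then the function x(t) := (x1(t)·(x3(t) − x2(t)) + k·x2(t)·(x3(t) − x1(t))) / ((x3(t) − x2(t)) + k·(x3(t) − x1(t))) is differentiable and satisfies x'(t) = a0(t) + a1(t)·x(t) + a2(t)·x(t)² for all t ∈ ℝ. -/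
/-!
Writing a solution in homogeneous coordinates `x = N / D`, the quotient rule shows that `x` solves
the Riccati equation as soon as `N' D - N D' = a₀ D² + a₁ N D + a₂ N²`. For the superposition of three
solutions, with `N = x₁ (x₃ - x₂) + k x₂ (x₃ - x₁)` and `D = (x₃ - x₂) + k (x₃ - x₁)`, this is a
polynomial identity once each `xᵢ'` is replaced by `a₀ + a₁ xᵢ + a₂ xᵢ²`.
-/

variable {𝕜 : Type*} [NontriviallyNormedField 𝕜]

theorem HasDerivAt.div_of_riccati {N D : 𝕜 → 𝕜} {n d a0 a1 a2 t : 𝕜}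
    (hN : HasDerivAt N n t) (hD : HasDerivAt D d t) (hD0 : D t ≠ 0)
    (h : n * D t - N t * d = a0 * D t ^ 2 + a1 * N t * D t + a2 * N t ^ 2) :
    HasDerivAt (fun s => N s / D s)
      (a0 + a1 * (N t / D t) + a2 * (N t / D t) ^ 2) t := by
  refine (hN.div hD hD0).congr_deriv ?_
  rw [h]
  field_simp

theorem hasDerivAt_riccati_superposition {x1 x2 x3 : 𝕜 → 𝕜} {a0 a1 a2 k t : 𝕜}
    (h1 : HasDerivAt x1 (a0 + a1 * x1 t + a2 * x1 t ^ 2) t)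
    (h2 : HasDerivAt x2 (a0 + a1 * x2 t + a2 * x2 t ^ 2) t)
    (h3 : HasDerivAt x3 (a0 + a1 * x3 t + a2 * x3 t ^ 2) t)
    (hden : (x3 t - x2 t) + k * (x3 t - x1 t) ≠ 0) :
    HasDerivAt
      (fun s => (x1 s * (x3 s - x2 s) + k * x2 s * (x3 s - x1 s)) /
        ((x3 s - x2 s) + k * (x3 s - x1 s)))
      (a0 + a1 * ((x1 t * (x3 t - x2 t) + k * x2 t * (x3 t - x1 t)) /
          ((x3 t - x2 t) + k * (x3 t - x1 t))) +
        a2 * ((x1 t * (x3 t - x2 t) + k * x2 t * (x3 t - x1 t)) /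
          ((x3 t - x2 t) + k * (x3 t - x1 t))) ^ 2) t :=
  HasDerivAt.div_of_riccati
    ((h1.fun_mul (h3.fun_sub h2)).fun_add ((h2.const_mul k).fun_mul (h3.fun_sub h1)))
    ((h3.fun_sub h2).fun_add ((h3.fun_sub h1).const_mul k)) hden (by ring)

/-- The superposition rule for the Riccati equation: given three particular
solutions `x1, x2, x3` and a constant `k` such that the denominator never
vanishes, the combination is again a solution. -/
theorem riccati_superposition_rule
    (a0 a1 a2 x1 x2 x3 : ℝ → ℝ) (k : ℝ)
    (hx1 : Differentiable ℝ x1) (hx2 : Differentiable ℝ x2) (hx3 : Differentiable ℝ x3)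
    (hx1' : ∀ t, deriv x1 t = a0 t + a1 t * x1 t + a2 t * (x1 t) ^ 2)
    (hx2' : ∀ t, deriv x2 t = a0 t + a1 t * x2 t + a2 t * (x2 t) ^ 2)
    (hx3' : ∀ t, deriv x3 t = a0 t + a1 t * x3 t + a2 t * (x3 t) ^ 2)
    (hden : ∀ t, (x3 t - x2 t) + k * (x3 t - x1 t) ≠ 0) :
    Differentiable ℝ
      (fun t => (x1 t * (x3 t - x2 t) + k * x2 t * (x3 t - x1 t)) /
        ((x3 t - x2 t) + k * (x3 t - x1 t))) ∧
    ∀ t, deriv (fun t => (x1 t * (x3 t - x2 t) + k * x2 t * (x3 t - x1 t)) /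
        ((x3 t - x2 t) + k * (x3 t - x1 t))) t =
      a0 t + a1 t * ((x1 t * (x3 t - x2 t) + k * x2 t * (x3 t - x1 t)) /
        ((x3 t - x2 t) + k * (x3 t - x1 t))) +
      a2 t * ((x1 t * (x3 t - x2 t) + k * x2 t * (x3 t - x1 t)) /
        ((x3 t - x2 t) + k * (x3 t - x1 t))) ^ 2 := by
  have hsol t := hasDerivAt_riccati_superposition
    ((hx1 t).hasDerivAt.congr_deriv (hx1' t)) ((hx2 t).hasDerivAt.congr_deriv (hx2' t))
    ((hx3 t).hasDerivAt.congr_deriv (hx3' t)) (hden t)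
  exact ⟨fun t => (hsol t).differentiableAt, fun t => (hsol t).deriv⟩
end

section
/- Let ω : ℝ → ℝ, let f, g : ℝ → ℝ be continuous, and let F : {u ∈ ℝ : u ≠ 0} → ℝ be differentiable with F'(u) = f(u) − u⁻²·g(1/u) for every u ≠ 0. Let x, y : ℝ → ℝ be twice differentiable with x(t) ≠ 0 and y(t) ≠ 0 for all t, satisfying the generalized Ermakov system x''(t) = −ω(t)²·x(t) + g(y(t)/x(t))/(y(t)·x(t)²) and y''(t) = −ω(t)²·y(t) + f(x(t)/y(t))/(x(t)·y(t)²). Then the generalized Lewis invariant I(t) := (1/2)·(x(t)·y'(t) − y(t)·x'(t))² + F(x(t)/y(t)) is constant on ℝ. -/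
/-!
With `W = x y' − y x'` and `u = x/y` one has `u' = −W/y²`, while the Ermakov system makes the
`ω²` terms cancel in `W' = x y'' − y x''`, leaving `W' = F'(u)/y²`. Hence
`d/dt (W²/2 + F(u)) = W F'(u)/y² − F'(u) W/y² = 0`.
-/

section

variable {x y x' y' : ℝ → ℝ} {t : ℝ}

theorem hasDerivAt_wronskian {x'' y'' : ℝ} (hx : HasDerivAt x (x' t) t)
    (hy : HasDerivAt y (y' t) t) (hx' : HasDerivAt x' x'' t) (hy' : HasDerivAt y' y'' t) :
    HasDerivAt (fun s => x s * y' s - y s * x' s) (x t * y'' - y t * x'') t :=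
  ((hx.mul hy').sub (hy.mul hx')).congr_deriv (by ring)

theorem hasDerivAt_div_eq_neg_wronskian (hx : HasDerivAt x (x' t) t)
    (hy : HasDerivAt y (y' t) t) (hy0 : y t ≠ 0) :
    HasDerivAt (fun s => x s / y s) (-(x t * y' t - y t * x' t) / y t ^ 2) t :=
  (hx.div hy hy0).congr_deriv (by ring)

theorem hasDerivAt_half_wronskian_sq_add_comp_div {F : ℝ → ℝ} {F' x'' y'' : ℝ}
    (hx : HasDerivAt x (x' t) t) (hy : HasDerivAt y (y' t) t)
    (hx' : HasDerivAt x' x'' t) (hy' : HasDerivAt y' y'' t) (hy0 : y t ≠ 0)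
    (hF : HasDerivAt F F' (x t / y t)) (hW : x t * y'' - y t * x'' = F' / y t ^ 2) :
    HasDerivAt (fun s => 1 / 2 * (x s * y' s - y s * x' s) ^ 2 + F (x s / y s)) 0 t := by
  have hI := (((hasDerivAt_wronskian hx hy hx' hy').pow 2).const_mul (1 / 2 : ℝ)).add
    (hF.comp t (hasDerivAt_div_eq_neg_wronskian hx hy hy0))
  refine hI.congr_deriv ?_
  rw [hW]
  field_simp
  ring

end

theorem ermakov_wronskian_eq {f g : ℝ → ℝ} {ω X Y X'' Y'' : ℝ} (hX : X ≠ 0) (hY : Y ≠ 0)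
    (hX'' : X'' = -ω ^ 2 * X + g (Y / X) / (Y * X ^ 2))
    (hY'' : Y'' = -ω ^ 2 * Y + f (X / Y) / (X * Y ^ 2)) :
    X * Y'' - Y * X'' = (f (X / Y) - ((X / Y)⁻¹) ^ 2 * g (1 / (X / Y))) / Y ^ 2 := by
  rw [hX'', hY'', one_div_div, inv_div]
  field_simp
  ring

theorem generalized_ermakov_lewis_invariant_general
    (ω f g : ℝ → ℝ) (F : ℝ → ℝ) (x y : ℝ → ℝ)
    (hF : ∀ u : ℝ, u ≠ 0 → HasDerivAt F (f u - (u⁻¹) ^ 2 * g (1 / u)) u)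
    (hx : Differentiable ℝ x) (hx' : Differentiable ℝ (deriv x))
    (hy : Differentiable ℝ y) (hy' : Differentiable ℝ (deriv y))
    (hx0 : ∀ t, x t ≠ 0) (hy0 : ∀ t, y t ≠ 0)
    (hxeq : ∀ t, deriv (deriv x) t =
      -(ω t) ^ 2 * x t + g (y t / x t) / (y t * (x t) ^ 2))
    (hyeq : ∀ t, deriv (deriv y) t =
      -(ω t) ^ 2 * y t + f (x t / y t) / (x t * (y t) ^ 2)) :
    ∃ c : ℝ, ∀ t : ℝ,
      (1 / 2) * (x t * deriv y t - y t * deriv x t) ^ 2 + F (x t / y t) = c := by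
  have hI : ∀ t, HasDerivAt
      (fun s => 1 / 2 * (x s * deriv y s - y s * deriv x s) ^ 2 + F (x s / y s)) 0 t :=
    fun t => hasDerivAt_half_wronskian_sq_add_comp_div (hx t).hasDerivAt (hy t).hasDerivAt
      (hx' t).hasDerivAt (hy' t).hasDerivAt (hy0 t) (hF _ (div_ne_zero (hx0 t) (hy0 t)))
      (ermakov_wronskian_eq (hx0 t) (hy0 t) (hxeq t) (hyeq t))
  exact ⟨_, fun t => is_const_of_deriv_eq_zero (fun s => (hI s).differentiableAt)
    (fun s => (hI s).deriv) t 0⟩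

/-- The generalized Lewis invariant
`I(t) = (1/2)(x y' − y x')² + F(x/y)` of the generalized Ermakov system
`x'' = −ω²(t)x + g(y/x)/(y x²)`, `y'' = −ω²(t)y + f(x/y)/(x y²)`
is a constant of the motion. -/
theorem generalized_ermakov_lewis_invariant
    (ω f g : ℝ → ℝ) (F : ℝ → ℝ) (x y : ℝ → ℝ)
    (hf : Continuous f) (hg : Continuous g)
    (hF : ∀ u : ℝ, u ≠ 0 → HasDerivAt F (f u - (u⁻¹) ^ 2 * g (1 / u)) u)
    (hx : Differentiable ℝ x) (hx' : Differentiable ℝ (deriv x))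
    (hy : Differentiable ℝ y) (hy' : Differentiable ℝ (deriv y))
    (hx0 : ∀ t, x t ≠ 0) (hy0 : ∀ t, y t ≠ 0)
    (hxeq : ∀ t, deriv (deriv x) t =
      -(ω t) ^ 2 * x t + g (y t / x t) / (y t * (x t) ^ 2))
    (hyeq : ∀ t, deriv (deriv y) t =
      -(ω t) ^ 2 * y t + f (x t / y t) / (x t * (y t) ^ 2)) :
    ∃ c : ℝ, ∀ t : ℝ,
      (1 / 2) * (x t * deriv y t - y t * deriv x t) ^ 2 + F (x t / y t) = c :=
  generalized_ermakov_lewis_invariant_general ω f g F x y hF hx hx' hy hy' hx0 hy0 hxeq hyeq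
end

section
/- Let f, g : ℝ → ℝ be continuous and let F : {u ∈ ℝ : u ≠ 0} → ℝ be differentiable with F'(u) = f(u) − u⁻²·g(1/u) for every u ≠ 0. On the open set U = {(x, y, vx, vy) ∈ ℝ⁴ : x ≠ 0 and y ≠ 0} define the function I(x, y, vx, vy) = (1/2)·(x·vy − y·vx)² + F(x/y) and the vector fields X1(x, y, vx, vy) = (vx, vy, g(y/x)/(x²·y), f(x/y)/(x·y²)), X2(x, y, vx, vy) = (1/2)·(x, y, −vx, −vy), X3(x, y, vx, vy) = (0, 0, −x, −y), where the four components correspond to the coordinates (x, y, vx, vy). Then I is a common first integral of X1, X2 and X3, i.e. for every p ∈ U and each i ∈ {1, 2, 3} the directional derivative of I at p in the direction Xi(p) vanishes: (DI(p))(Xi(p)) = 0. -/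
/-!
Write `L = x·vy − y·vx` and `u = x/y`, so that `I = L²/2 + F(u)` and `dI = L·dL + F'(u)·du`.
`X2` and `X3` generate the rescalings `(x, y, vx, vy) ↦ (λx, λy, vx/λ, vy/λ)` and the shears
`(vx, vy) ↦ (vx − t·x, vy − t·y)`, both of which preserve `L` and `u`. Along `X1` one finds
`dL = f(u)/y² − g(1/u)/x²` and `du = −L/y²`, and `F'(u) = f(u) − u⁻²·g(1/u)` makes the two
contributions cancel.
-/

namespace Ermakov

open ContinuousLinearMap

abbrev Phase := ℝ × ℝ × ℝ × ℝ

def angularMomentum (p : Phase) : ℝ := p.1 * p.2.2.2 - p.2.1 * p.2.2.1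

noncomputable def ratio (p : Phase) : ℝ := p.1 / p.2.1

noncomputable def invariant (F : ℝ → ℝ) (p : Phase) : ℝ :=
  (1 / 2) * angularMomentum p ^ 2 + F (ratio p)

noncomputable def vectorField (f g : ℝ → ℝ) (p : Phase) : Phase :=
  (p.2.2.1, p.2.2.2, g (p.2.1 / p.1) / (p.1 ^ 2 * p.2.1), f (p.1 / p.2.1) / (p.1 * p.2.1 ^ 2))

theorem differentiableAt_angularMomentum (p : Phase) :
    DifferentiableAt ℝ angularMomentum p := by
  unfold angularMomentum
  fun_prop

theorem fderiv_angularMomentum_apply (p v : Phase) :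
    fderiv ℝ angularMomentum p v =
      v.1 * p.2.2.2 + p.1 * v.2.2.2 - (v.2.1 * p.2.2.1 + p.2.1 * v.2.2.1) := by
  have h : HasFDerivAt angularMomentum _ p :=
    ((hasFDerivAt_fst (p := p) (𝕜 := ℝ)).fun_mul (hasFDerivAt_snd (p := p)).snd.snd).fun_sub
      ((hasFDerivAt_snd (p := p) (𝕜 := ℝ)).fst.fun_mul (hasFDerivAt_snd (p := p)).snd.fst)
  rw [h.fderiv]
  simp only [sub_apply, add_apply, smul_apply, comp_apply, coe_fst', coe_snd', smul_eq_mul]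
  ring

theorem differentiableAt_ratio {p : Phase} (hy : p.2.1 ≠ 0) : DifferentiableAt ℝ ratio p := by
  unfold ratio
  fun_prop (disch := exact hy)

theorem fderiv_ratio_apply {p : Phase} (hy : p.2.1 ≠ 0) (v : Phase) :
    fderiv ℝ ratio p v = (v.1 * p.2.1 - p.1 * v.2.1) / p.2.1 ^ 2 := by
  have h : HasFDerivAt ratio _ p :=
    (hasFDerivAt_fst (p := p) (𝕜 := ℝ)).fun_mul
      ((hasDerivAt_inv hy).comp_hasFDerivAt p (hasFDerivAt_snd (p := p)).fst)
  rw [h.fderiv]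
  simp only [neg_smul, smul_neg, add_apply, neg_apply, smul_apply, comp_apply, coe_fst', coe_snd',
    smul_eq_mul]
  field_simp
  ring

theorem fderiv_invariant_apply {F : ℝ → ℝ} {F' : ℝ} {p : Phase} (hF : HasDerivAt F F' (ratio p))
    (hy : p.2.1 ≠ 0) (v : Phase) :
    fderiv ℝ (invariant F) p v =
      angularMomentum p * fderiv ℝ angularMomentum p v + F' * fderiv ℝ ratio p v := by
  have h : HasFDerivAt (invariant F) _ p :=
    (((differentiableAt_angularMomentum p).hasFDerivAt.pow 2).const_mul (1 / 2)).add
      (hF.comp_hasFDerivAt p (differentiableAt_ratio hy).hasFDerivAt)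
  rw [h.fderiv]
  simp only [add_apply, smul_apply, smul_eq_mul]
  ring

theorem fderiv_invariant_apply_eq_zero {F : ℝ → ℝ} {p v : Phase} (hF : DifferentiableAt ℝ F (ratio p))
    (hy : p.2.1 ≠ 0) (hL : fderiv ℝ angularMomentum p v = 0) (hu : fderiv ℝ ratio p v = 0) :
    fderiv ℝ (invariant F) p v = 0 := by
  rw [fderiv_invariant_apply hF.hasDerivAt hy, hL, hu]
  ring

theorem fderiv_invariant_vectorField {f g F : ℝ → ℝ} {p : Phase} (hx : p.1 ≠ 0) (hy : p.2.1 ≠ 0)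
    (hF : HasDerivAt F (f (ratio p) - (ratio p)⁻¹ ^ 2 * g (1 / ratio p)) (ratio p)) :
    fderiv ℝ (invariant F) p (vectorField f g p) = 0 := by
  rw [fderiv_invariant_apply hF hy, fderiv_angularMomentum_apply, fderiv_ratio_apply hy]
  obtain ⟨x, y, vx, vy⟩ := p
  simp only [vectorField, angularMomentum, ratio] at hx hy ⊢
  rw [one_div_div]
  field_simp
  ring

end Ermakov

open Ermakov in
theorem ermakov_common_first_integral_general
    (f g : ℝ → ℝ) (F : ℝ → ℝ)
    (hF : ∀ u : ℝ, u ≠ 0 → HasDerivAt F (f u - (u⁻¹) ^ 2 * g (1 / u)) u) :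
    let I : ℝ × ℝ × ℝ × ℝ → ℝ := fun p =>
      (1 / 2) * (p.1 * p.2.2.2 - p.2.1 * p.2.2.1) ^ 2 + F (p.1 / p.2.1)
    let X1 : ℝ × ℝ × ℝ × ℝ → ℝ × ℝ × ℝ × ℝ := fun p =>
      (p.2.2.1, p.2.2.2, g (p.2.1 / p.1) / (p.1 ^ 2 * p.2.1),
        f (p.1 / p.2.1) / (p.1 * p.2.1 ^ 2))
    let X2 : ℝ × ℝ × ℝ × ℝ → ℝ × ℝ × ℝ × ℝ := fun p =>
      (1 / 2 : ℝ) • (p.1, p.2.1, -p.2.2.1, -p.2.2.2)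
    let X3 : ℝ × ℝ × ℝ × ℝ → ℝ × ℝ × ℝ × ℝ := fun p => (0, 0, -p.1, -p.2.1)
    ∀ p : ℝ × ℝ × ℝ × ℝ, p.1 ≠ 0 → p.2.1 ≠ 0 →
      fderiv ℝ I p (X1 p) = 0 ∧ fderiv ℝ I p (X2 p) = 0 ∧
        fderiv ℝ I p (X3 p) = 0 := by
  intro I X1 X2 X3 p hx hy
  have hFp : HasDerivAt F _ (ratio p) := hF _ (div_ne_zero hx hy)
  refine ⟨fderiv_invariant_vectorField hx hy hFp, ?_, ?_⟩ <;>
    refine fderiv_invariant_apply_eq_zero hFp.differentiableAt hy ?_ ?_ <;>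
    simp only [X2, X3, fderiv_angularMomentum_apply, fderiv_ratio_apply hy, Prod.smul_mk,
      smul_eq_mul] <;>
    ring

/-- On `U = {(x, y, vx, vy) : x ≠ 0 ∧ y ≠ 0} ⊆ ℝ⁴`, the function
`I = (1/2)(x·vy − y·vx)² + F(x/y)` is a common first integral of the vector
fields `X1, X2, X3` of the Vessiot--Guldberg Lie algebra of the generalized
Ermakov system. -/
theorem ermakov_common_first_integral
    (f g : ℝ → ℝ) (F : ℝ → ℝ)
    (hf : Continuous f) (hg : Continuous g)
    (hF : ∀ u : ℝ, u ≠ 0 → HasDerivAt F (f u - (u⁻¹) ^ 2 * g (1 / u)) u) :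
    let I : ℝ × ℝ × ℝ × ℝ → ℝ := fun p =>
      (1 / 2) * (p.1 * p.2.2.2 - p.2.1 * p.2.2.1) ^ 2 + F (p.1 / p.2.1)
    let X1 : ℝ × ℝ × ℝ × ℝ → ℝ × ℝ × ℝ × ℝ := fun p =>
      (p.2.2.1, p.2.2.2, g (p.2.1 / p.1) / (p.1 ^ 2 * p.2.1),
        f (p.1 / p.2.1) / (p.1 * p.2.1 ^ 2))
    let X2 : ℝ × ℝ × ℝ × ℝ → ℝ × ℝ × ℝ × ℝ := fun p =>
      (1 / 2 : ℝ) • (p.1, p.2.1, -p.2.2.1, -p.2.2.2)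
    let X3 : ℝ × ℝ × ℝ × ℝ → ℝ × ℝ × ℝ × ℝ := fun p => (0, 0, -p.1, -p.2.1)
    ∀ p : ℝ × ℝ × ℝ × ℝ, p.1 ≠ 0 → p.2.1 ≠ 0 →
      fderiv ℝ I p (X1 p) = 0 ∧ fderiv ℝ I p (X2 p) = 0 ∧
        fderiv ℝ I p (X3 p) = 0 :=
  ermakov_common_first_integral_general f g F hF
end

section
/- Let φ, ψ : ℝ² → ℝ be continuously differentiable. On the open set U = {(x, y, vx, vy) ∈ ℝ⁴ : x ≠ 0 and y ≠ 0} define the vector fields X1(x, y, vx, vy) = (vx, vy, ψ((x·vy − y·vx)², x/y)/(x²·y), φ((x·vy − y·vx)², x/y)/(x·y²)), X2(x, y, vx, vy) = (1/2)·(x, y, −vx, −vy), X3(x, y, vx, vy) = (0, 0, −x, −y), where the four components correspond to the coordinates (x, y, vx, vy). Then at every point of U the Lie brackets (computed within U) satisfy [X1, X2] = X1, [X1, X3] = 2·X2 and [X2, X3] = X3; in particular X1, X2, X3 span a Lie algebra of vector fields on U isomorphic to sl(2, ℝ). -/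
/-!
`X2` and `X3` are linear vector fields, so each bracket reduces to a directional derivative
of `X1` along `X2` or `X3`. These are computed along curves instead of by differentiating
`X1`: the dilation `(s x, s y, vx / s, vy / s)` (the flow of `X2`, time `2 log s`) and the
shear `(x, y, vx - t x, vy - t y)` (the flow of `X3`) both preserve `(x vy - y vx)²` and
`x / y`, so along them the unknown functions `φ, ψ` are frozen: `X1` only rescales, with
weight `-1` on its first two and `-3` on its last two components, or shifts by `-t (x, y, 0, 0)`.
-/

open Filter Topology VectorField

section LinearVectorField

variable {𝕜 : Type*} [NontriviallyNormedField 𝕜] [CompleteSpace 𝕜]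
  {E : Type*} [NormedAddCommGroup E] [NormedSpace 𝕜 E] [FiniteDimensional 𝕜 E]

theorem IsLinearMap.fderiv_apply {F : Type*} [NormedAddCommGroup F] [NormedSpace 𝕜 F]
    {f : E → F} (hf : IsLinearMap 𝕜 f) (x v : E) : fderiv 𝕜 f x v = f v := by
  have h : HasFDerivAt f (LinearMap.toContinuousLinearMap hf.mk') x :=
    (LinearMap.toContinuousLinearMap hf.mk').hasFDerivAt
  rw [h.fderiv]
  rfl

theorem VectorField.lieBracket_of_isLinearMap_right {V A : E → E} (hA : IsLinearMap 𝕜 A)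
    (x : E) : lieBracket 𝕜 V A x = A (V x) - fderiv 𝕜 V x (A x) := by
  rw [lieBracket, hA.fderiv_apply]

end LinearVectorField

local notation "ℝ⁴" => ℝ × ℝ × ℝ × ℝ

noncomputable section

namespace GeneralizedErmakov

def domain : Set ℝ⁴ := {p | p.1 ≠ 0 ∧ p.2.1 ≠ 0}

def invariants (p : ℝ⁴) : ℝ × ℝ := ((p.1 * p.2.2.2 - p.2.1 * p.2.2.1) ^ 2, p.1 / p.2.1)

def ermakovField (φ ψ : ℝ × ℝ → ℝ) (p : ℝ⁴) : ℝ⁴ :=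
  (p.2.2.1, p.2.2.2, ψ (invariants p) / (p.1 ^ 2 * p.2.1), φ (invariants p) / (p.1 * p.2.1 ^ 2))

def scalingField (p : ℝ⁴) : ℝ⁴ := (1 / 2 : ℝ) • (p.1, p.2.1, -p.2.2.1, -p.2.2.2)

def shearField (p : ℝ⁴) : ℝ⁴ := (0, 0, -p.1, -p.2.1)

def dilate (s : ℝ) (p : ℝ⁴) : ℝ⁴ := (s * p.1, s * p.2.1, s⁻¹ * p.2.2.1, s⁻¹ * p.2.2.2)

def shear (t : ℝ) (p : ℝ⁴) : ℝ⁴ := (p.1, p.2.1, p.2.2.1 - t * p.1, p.2.2.2 - t * p.2.1)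

theorem isOpen_domain : IsOpen domain :=
  (isOpen_ne_fun continuous_fst continuous_const).inter
    (isOpen_ne_fun (continuous_fst.comp continuous_snd) continuous_const)

theorem isLinearMap_scalingField : IsLinearMap ℝ scalingField := by
  constructor <;> intros <;> simp only [scalingField] <;> ext <;> simp <;> ring

theorem isLinearMap_shearField : IsLinearMap ℝ shearField := by
  constructor <;> intros <;> simp only [shearField] <;> ext <;> simp <;> ring

theorem invariants_dilate {s : ℝ} (hs : s ≠ 0) (p : ℝ⁴) :
    invariants (dilate s p) = invariants p := by
  simp only [invariants, dilate, Prod.mk.injEq]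
  constructor
  · field_simp
  · rw [mul_div_mul_left _ _ hs]

theorem invariants_shear (t : ℝ) (p : ℝ⁴) : invariants (shear t p) = invariants p := by
  simp only [invariants, shear]
  ring_nf

variable {φ ψ : ℝ × ℝ → ℝ}

theorem ermakovField_dilate {s : ℝ} (hs : s ≠ 0) (p : ℝ⁴) :
    ermakovField φ ψ (dilate s p) =
      (s⁻¹ * (ermakovField φ ψ p).1, s⁻¹ * (ermakovField φ ψ p).2.1,
        (s ^ 3)⁻¹ * (ermakovField φ ψ p).2.2.1, (s ^ 3)⁻¹ * (ermakovField φ ψ p).2.2.2) := by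
  simp only [ermakovField, invariants_dilate hs]
  simp only [dilate]
  refine Prod.ext rfl (Prod.ext rfl (Prod.ext ?_ ?_)) <;> simp only <;> field_simp

theorem ermakovField_shear (t : ℝ) (p : ℝ⁴) :
    ermakovField φ ψ (shear t p) =
      ((ermakovField φ ψ p).1 - t * p.1, (ermakovField φ ψ p).2.1 - t * p.2.1,
        (ermakovField φ ψ p).2.2.1, (ermakovField φ ψ p).2.2.2) := by
  simp only [ermakovField, invariants_shear]
  rfl

theorem hasDerivAt_dilate (p : ℝ⁴) :
    HasDerivAt (fun s ↦ dilate s p) ((2 : ℝ) • scalingField p) 1 := by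
  have hinv : HasDerivAt (fun s : ℝ ↦ s⁻¹) (-1) 1 := by
    simpa using hasDerivAt_inv (one_ne_zero : (1 : ℝ) ≠ 0)
  have h := ((hasDerivAt_id' (1 : ℝ)).mul_const p.1).prodMk
    (((hasDerivAt_id' (1 : ℝ)).mul_const p.2.1).prodMk
      ((hinv.mul_const p.2.2.1).prodMk (hinv.mul_const p.2.2.2)))
  exact h.congr_deriv (by simp [scalingField])

theorem hasDerivAt_shear (p : ℝ⁴) : HasDerivAt (fun t ↦ shear t p) (shearField p) 0 := by
  have h := (hasDerivAt_const (0 : ℝ) p.1).prodMk ((hasDerivAt_const (0 : ℝ) p.2.1).prodMk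
    ((((hasDerivAt_id' (0 : ℝ)).mul_const p.1).const_sub p.2.2.1).prodMk
      (((hasDerivAt_id' (0 : ℝ)).mul_const p.2.1).const_sub p.2.2.2)))
  exact h.congr_deriv (by simp [shearField])

theorem differentiableAt_ermakovField {p : ℝ⁴} (hp : p ∈ domain)
    (hφ : DifferentiableAt ℝ φ (invariants p)) (hψ : DifferentiableAt ℝ ψ (invariants p)) :
    DifferentiableAt ℝ (ermakovField φ ψ) p := by
  obtain ⟨hx, hy⟩ := hp
  have hI : DifferentiableAt ℝ invariants p := by
    unfold invariants
    fun_prop (disch := exact hy)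
  unfold ermakovField
  have := hφ.comp p hI
  have := hψ.comp p hI
  fun_prop (disch := simp [hx, hy])

theorem fderiv_ermakovField_scalingField {p : ℝ⁴}
    (hX : DifferentiableAt ℝ (ermakovField φ ψ) p) :
    fderiv ℝ (ermakovField φ ψ) p (scalingField p) =
      scalingField (ermakovField φ ψ p) - ermakovField φ ψ p := by
  set X := ermakovField φ ψ p
  have hcurve := hX.hasFDerivAt.comp_hasDerivAt_of_eq 1 (hasDerivAt_dilate p) (by simp [dilate])
  have hinv : HasDerivAt (fun s : ℝ ↦ s⁻¹) (-1) 1 := by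
    simpa using hasDerivAt_inv (one_ne_zero : (1 : ℝ) ≠ 0)
  have hinv3 : HasDerivAt (fun s : ℝ ↦ (s ^ 3)⁻¹) (-3) 1 :=
    ((hasDerivAt_pow 3 (1 : ℝ)).inv (by norm_num)).congr_deriv (by norm_num)
  have hhom := (hinv.mul_const X.1).prodMk ((hinv.mul_const X.2.1).prodMk
    ((hinv3.mul_const X.2.2.1).prodMk (hinv3.mul_const X.2.2.2)))
  have heq : (ermakovField φ ψ ∘ fun s ↦ dilate s p) =ᶠ[𝓝 1]
      fun s ↦ (s⁻¹ * X.1, s⁻¹ * X.2.1, (s ^ 3)⁻¹ * X.2.2.1, (s ^ 3)⁻¹ * X.2.2.2) :=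
    (eventually_ne_nhds one_ne_zero).mono fun s hs ↦ ermakovField_dilate hs p
  have h := hcurve.unique (hhom.congr_of_eventuallyEq heq)
  rw [map_smul] at h
  rw [← inv_smul_smul₀ (two_ne_zero' ℝ) (fderiv ℝ (ermakovField φ ψ) p (scalingField p)), h]
  simp only [scalingField]
  ext <;> simp <;> ring

theorem fderiv_ermakovField_shearField {p : ℝ⁴}
    (hX : DifferentiableAt ℝ (ermakovField φ ψ) p) :
    fderiv ℝ (ermakovField φ ψ) p (shearField p) =
      shearField (ermakovField φ ψ p) - (2 : ℝ) • scalingField p := by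
  set X := ermakovField φ ψ p
  have hcurve := hX.hasFDerivAt.comp_hasDerivAt_of_eq 0 (hasDerivAt_shear p) (by simp [shear])
  have hlin := ((((hasDerivAt_id' (0 : ℝ)).mul_const p.1).const_sub X.1).prodMk
    ((((hasDerivAt_id' (0 : ℝ)).mul_const p.2.1).const_sub X.2.1).prodMk
      ((hasDerivAt_const (0 : ℝ) X.2.2.1).prodMk (hasDerivAt_const (0 : ℝ) X.2.2.2))))
  rw [hcurve.unique
    (hlin.congr_of_eventuallyEq (Eventually.of_forall fun t ↦ ermakovField_shear t p))]
  simp only [X, ermakovField, shearField, scalingField]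
  ext <;> simp

theorem lieBracket_ermakovField_scalingField {p : ℝ⁴}
    (hX : DifferentiableAt ℝ (ermakovField φ ψ) p) :
    lieBracket ℝ (ermakovField φ ψ) scalingField p = ermakovField φ ψ p := by
  rw [lieBracket_of_isLinearMap_right isLinearMap_scalingField,
    fderiv_ermakovField_scalingField hX, sub_sub_cancel]

theorem lieBracket_ermakovField_shearField {p : ℝ⁴}
    (hX : DifferentiableAt ℝ (ermakovField φ ψ) p) :
    lieBracket ℝ (ermakovField φ ψ) shearField p = (2 : ℝ) • scalingField p := by
  rw [lieBracket_of_isLinearMap_right isLinearMap_shearField,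
    fderiv_ermakovField_shearField hX, sub_sub_cancel]

theorem lieBracket_scalingField_shearField (p : ℝ⁴) :
    lieBracket ℝ scalingField shearField p = shearField p := by
  rw [lieBracket_of_isLinearMap_right isLinearMap_shearField,
    isLinearMap_scalingField.fderiv_apply]
  simp only [scalingField, shearField]
  ext <;> simp <;> ring

end GeneralizedErmakov

end

open GeneralizedErmakov

/-- The Vessiot--Guldberg Lie algebra of the new class of generalized Ermakov
systems: on `U = {(x, y, vx, vy) : x ≠ 0 ∧ y ≠ 0} ⊆ ℝ⁴`, the vector fields
`X1, X2, X3` satisfy the `sl(2, ℝ)` commutation relations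
`[X1, X2] = X1`, `[X1, X3] = 2 X2`, `[X2, X3] = X3`. -/
theorem generalized_ermakov_sl2_vessiot_guldberg
    (φ ψ : ℝ × ℝ → ℝ) (hφ : ContDiff ℝ 1 φ) (hψ : ContDiff ℝ 1 ψ) :
    let U : Set (ℝ × ℝ × ℝ × ℝ) := {p | p.1 ≠ 0 ∧ p.2.1 ≠ 0}
    let X1 : ℝ × ℝ × ℝ × ℝ → ℝ × ℝ × ℝ × ℝ := fun p =>
      (p.2.2.1, p.2.2.2,
        ψ ((p.1 * p.2.2.2 - p.2.1 * p.2.2.1) ^ 2, p.1 / p.2.1) / (p.1 ^ 2 * p.2.1),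
        φ ((p.1 * p.2.2.2 - p.2.1 * p.2.2.1) ^ 2, p.1 / p.2.1) / (p.1 * p.2.1 ^ 2))
    let X2 : ℝ × ℝ × ℝ × ℝ → ℝ × ℝ × ℝ × ℝ := fun p =>
      (1 / 2 : ℝ) • (p.1, p.2.1, -p.2.2.1, -p.2.2.2)
    let X3 : ℝ × ℝ × ℝ × ℝ → ℝ × ℝ × ℝ × ℝ := fun p => (0, 0, -p.1, -p.2.1)
    ∀ p ∈ U,
      VectorField.lieBracketWithin ℝ X1 X2 U p = X1 p ∧
      VectorField.lieBracketWithin ℝ X1 X3 U p = (2 : ℝ) • X2 p ∧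
      VectorField.lieBracketWithin ℝ X2 X3 U p = X3 p := by
  change ∀ p ∈ domain,
    lieBracketWithin ℝ (ermakovField φ ψ) scalingField domain p = ermakovField φ ψ p ∧
    lieBracketWithin ℝ (ermakovField φ ψ) shearField domain p = (2 : ℝ) • scalingField p ∧
    lieBracketWithin ℝ scalingField shearField domain p = shearField p
  intro p hp
  have hX : DifferentiableAt ℝ (ermakovField φ ψ) p := differentiableAt_ermakovField hp
    ((hφ.differentiable one_ne_zero) _) ((hψ.differentiable one_ne_zero) _)
  simp only [lieBracketWithin_of_isOpen isOpen_domain hp]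
  exact ⟨lieBracket_ermakovField_scalingField hX, lieBracket_ermakovField_shearField hX,
    lieBracket_scalingField_shearField p⟩
end

section
/- Let n, m, r ∈ ℕ and let X₁, …, X_r : ℝⁿ → ℝⁿ be vector fields whose diagonal prolongations X₁^[m], …, X_r^[m] to (ℝⁿ)^m are linearly independent at every point of (ℝⁿ)^m (i.e. for every (p₁, …, p_m) ∈ (ℝⁿ)^m, the r vectors (X_α(p₁), …, X_α(p_m)) ∈ (ℝⁿ)^m are linearly independent over ℝ). Let b₁, …, b_r : (ℝⁿ)^{m+1} → ℝ. Then the vector field Σ_{α=1}^r b_α · X_α^[m+1] on (ℝⁿ)^{m+1} is the diagonal prolongation to (ℝⁿ)^{m+1} of some vector field Y : ℝⁿ → ℝⁿ if and only if all the functions b₁, …, b_r are constant. -/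
/-- Lemma 5.2 of the paper: if the diagonal prolongations of `X₁, …, X_r` to
`(ℝⁿ)^m` are linearly independent at every point, then a combination
`Σ_α b_α · X_α^[m+1]` on `(ℝⁿ)^{m+1}` is a diagonal prolongation of some vector
field on `ℝⁿ` if and only if the functions `b₁, …, b_r` are constant. -/
theorem diagonal_prolongation_combination_iff_constant
    (n m r : ℕ) (X : Fin r → (Fin n → ℝ) → (Fin n → ℝ))
    (hindep : ∀ p : Fin m → Fin n → ℝ,
      LinearIndependent ℝ (fun α : Fin r => (fun i => X α (p i) : Fin m → Fin n → ℝ)))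
    (b : Fin r → (Fin (m + 1) → Fin n → ℝ) → ℝ) :
    (∃ Y : (Fin n → ℝ) → (Fin n → ℝ),
        ∀ p : Fin (m + 1) → Fin n → ℝ,
          (∑ α : Fin r, b α p • (fun i => X α (p i) : Fin (m + 1) → Fin n → ℝ)) =
            fun i => Y (p i)) ↔
      ∀ α : Fin r, ∃ c : ℝ, ∀ p : Fin (m + 1) → Fin n → ℝ, b α p = c := by
  constructor
  · rintro ⟨Y, hY⟩
    -- Key: if p and q agree off a single index k, then all coefficients agree.
    have key : ∀ (k : Fin (m + 1)) (p q : Fin (m + 1) → Fin n → ℝ),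
        (∀ i, i ≠ k → p i = q i) → ∀ α, b α p = b α q := by
      intro k p q hpq α
      have hli := hindep (fun j => p (k.succAbove j))
      rw [Fintype.linearIndependent_iff] at hli
      have hz : ∑ β : Fin r, (b β p - b β q) •
          (fun j => X β (p (k.succAbove j)) : Fin m → Fin n → ℝ) = 0 := by
        funext j
        have e1 := congrFun (hY p) (k.succAbove j)
        have e2 := congrFun (hY q) (k.succAbove j)
        have hpq' : q (k.succAbove j) = p (k.succAbove j) :=
          (hpq _ (Fin.succAbove_ne k j)).symm
        simp only [Finset.sum_apply, Pi.smul_apply] at e1 e2 ⊢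
        rw [hpq'] at e2
        simp only [sub_smul, Finset.sum_sub_distrib]
        rw [e1, e2, sub_self]
        rfl
      exact sub_eq_zero.mp (hli (fun β => b β p - b β q) hz α)
    intro α
    refine ⟨b α (fun _ _ => 0), fun p => ?_⟩
    -- change coordinates of p into those of q := 0 one at a time
    have const : ∀ q : Fin (m + 1) → Fin n → ℝ, b α p = b α q := by
      intro q
      have step : ∀ t : ℕ, t ≤ m + 1 →
          b α p = b α (fun i => if (i : ℕ) < t then q i else p i) := by
        intro t
        induction t with
        | zero =>
          intro _
          congr 1
        | succ t ih =>
          intro ht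
          have ht' : t < m + 1 := ht
          refine (ih (le_of_lt ht')).trans ?_
          apply key ⟨t, ht'⟩
          intro i hi
          have hit : (i : ℕ) ≠ t := fun h => hi (Fin.ext h)
          by_cases h : (i : ℕ) < t
          · simp [h, Nat.lt_succ_of_lt h]
          · simp [h, show ¬ (i : ℕ) < t + 1 by omega]
      have h := step (m + 1) le_rfl
      have hq : (fun i : Fin (m + 1) => if (i : ℕ) < m + 1 then q i else p i) = q :=
        funext fun i => if_pos i.isLt
      rwa [hq] at h
    exact const (fun _ _ => 0)
  · intro h
    choose c hc using h
    refine ⟨fun x => ∑ α : Fin r, c α • X α x, fun p => ?_⟩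
    funext i
    simp only [Finset.sum_apply, Pi.smul_apply]
    exact Finset.sum_congr rfl fun β _ => by rw [hc β p]
end
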